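/- Let J be the Jacobi matrix on ℓ²(ℕ) with off-diagonal entries a_n > 0 and real diagonal entries b_n. If Σ_{n∈ℕ} 1/a_n = ∞, then J is essentially self-adjoint on the finitely supported sequences C_c(ℕ). -/

import Mathlib

/-! Since `J` is symmetric on `C_c(ℕ)`, by von Neumann's criterion it suffices that `J* u = z u`
has no nonzero solution for `z = ± i`; for the closure `S` this works because
`‖(S + i) x‖² = ‖S x‖² + ‖x‖²` makes the range of `S + i` closed, and its orthogonal complement is
`ker (J* - i)`. The adjoint `J*` acts by the same three-term formula, so such a `u ∈ ℓ²` solves the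
recurrence `J u = z u`, and summation by parts gives the Wronskian identity
`a n * (conj (u n) * u (n + 1) - u n * conj (u (n + 1))) = 2 i Im z * ∑_{k ≤ n} |u k|²`.
If `u m ≠ 0`, for `n ≥ m` the right side has modulus at least `2 |Im z| |u m|²` while the left side
has modulus at most `a n * (|u n|² + |u (n + 1)|²)`, so `1 / a n` is dominated by a summable
sequence. -/

noncomputable section

open scoped ComplexConjugate

namespace DefIdx

/-- The Hilbert space `ℓ²(V)` of square-summable complex functions on `V`. -/
abbrev L2 (V : Type*) := lp (fun _ : V => ℂ) 2

lemma memℓp_of_finite {V : Type*} {f : V → ℂ} (h : {x | f x ≠ 0}.Finite) :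
    Memℓp f 2 :=
  (memℓp_zero h).of_exponent_ge (zero_le)

/-- The subspace `C_c(V)` of finitely supported elements of `ℓ²(V)`. -/
def Cc (V : Type*) : Submodule ℂ (L2 V) where
  carrier := {f | {x | (f : ∀ _ : V, ℂ) x ≠ 0}.Finite}
  zero_mem' := by
    simp only [Set.mem_setOf_eq, lp.coeFn_zero, Pi.zero_apply, ne_eq, not_true_eq_false]
    simp
  add_mem' := by
    intro f g hf hg
    refine (hf.union hg).subset ?_
    intro x hx
    simp only [Set.mem_setOf_eq, lp.coeFn_add, Pi.add_apply] at hx ⊢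
    by_contra hc
    try push_neg at hc
    simp only [Set.mem_union, Set.mem_setOf_eq, not_or, not_not] at hc
    simp [hc.1, hc.2] at hx
  smul_mem' := by
    intro c f hf
    refine hf.subset ?_
    intro x hx
    simp only [Set.mem_setOf_eq, lp.coeFn_smul, Pi.smul_apply, smul_eq_mul] at hx ⊢
    intro h0
    simp [h0] at hx

section Adjacency

variable {V : Type*}

/-- The pointwise action of the adjacency matrix of a locally finite graph. -/
def adjA (G : SimpleGraph V) (hG : G.LocallyFinite) (f : V → ℂ) (x : V) : ℂ :=
  ∑ y ∈ @SimpleGraph.neighborFinset V G x (hG x), f y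

lemma adjA_support (G : SimpleGraph V) (hG : G.LocallyFinite) {f : V → ℂ}
    (hf : {x | f x ≠ 0}.Finite) : {x | adjA G hG f x ≠ 0}.Finite := by
  have hsub : {x | adjA G hG f x ≠ 0} ⊆ ⋃ y ∈ {x | f x ≠ 0}, (G.neighborSet y) := by
    intro x hx
    obtain ⟨y, hy, hfy⟩ := Finset.exists_ne_zero_of_sum_ne_zero hx
    have hadj : G.Adj x y := by
      have := @SimpleGraph.mem_neighborFinset V G x (hG x) y
      exact this.mp hy
    exact Set.mem_biUnion hfy (SimpleGraph.mem_neighborSet G y x |>.mpr hadj.symm)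
  exact (hf.biUnion fun y _ => by haveI := hG y; exact (G.neighborSet y).toFinite).subset hsub

/-- The adjacency operator of a locally finite graph, as a densely defined operator
on `ℓ²(V)` with domain the finitely supported functions. -/
def adjOp (G : SimpleGraph V) (hG : G.LocallyFinite) : L2 V →ₗ.[ℂ] L2 V where
  domain := Cc V
  toFun :=
    { toFun := fun f => ⟨adjA G hG f, memℓp_of_finite (adjA_support G hG f.2)⟩
      map_add' := by
        intro f g
        apply lp.ext
        funext x
        simp only [lp.coeFn_add, Pi.add_apply]
        show adjA G hG (((f : L2 V) + (g : L2 V) : L2 V)) x = _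
        simp only [adjA, lp.coeFn_add, Pi.add_apply]
        exact Finset.sum_add_distrib
      map_smul' := by
        intro c f
        apply lp.ext
        funext x
        simp only [RingHom.id_apply, lp.coeFn_smul, Pi.smul_apply, smul_eq_mul]
        show adjA G hG ((c • (f : L2 V) : L2 V)) x = _
        simp only [adjA, lp.coeFn_smul, Pi.smul_apply, smul_eq_mul]
        exact (Finset.mul_sum _ _ _).symm }

/-- The pointwise action of the combinatorial (physical) Laplacian. -/
def lapA (G : SimpleGraph V) (hG : G.LocallyFinite) (f : V → ℂ) (x : V) : ℂ :=
  ∑ y ∈ @SimpleGraph.neighborFinset V G x (hG x), (f x - f y)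

lemma lapA_support (G : SimpleGraph V) (hG : G.LocallyFinite) {f : V → ℂ}
    (hf : {x | f x ≠ 0}.Finite) : {x | lapA G hG f x ≠ 0}.Finite := by
  have hsub : {x | lapA G hG f x ≠ 0} ⊆
      {x | f x ≠ 0} ∪ ⋃ y ∈ {x | f x ≠ 0}, (G.neighborSet y) := by
    intro x hx
    by_contra hc
    simp only [Set.mem_union, Set.mem_setOf_eq, not_or, not_not] at hc
    obtain ⟨hfx, hmem⟩ := hc
    apply hx
    show lapA G hG f x = 0
    unfold lapA
    refine Finset.sum_eq_zero fun y hy => ?_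
    have hadj : G.Adj x y := (@SimpleGraph.mem_neighborFinset V G x (hG x) y).mp hy
    have hfy : f y = 0 := by
      by_contra hfy
      exact hmem (Set.mem_biUnion hfy ((SimpleGraph.mem_neighborSet G y x).mpr hadj.symm))
    rw [hfx, hfy, sub_zero]
  refine Set.Finite.subset ?_ hsub
  exact hf.union (hf.biUnion fun y _ => by haveI := hG y; exact (G.neighborSet y).toFinite)

/-- The combinatorial (physical) Laplacian of a locally finite graph, as a densely
defined operator on `ℓ²(V)` with domain the finitely supported functions. -/
def lapOp (G : SimpleGraph V) (hG : G.LocallyFinite) : L2 V →ₗ.[ℂ] L2 V where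
  domain := Cc V
  toFun :=
    { toFun := fun f => ⟨lapA G hG f, memℓp_of_finite (lapA_support G hG f.2)⟩
      map_add' := by
        intro f g
        apply lp.ext
        funext x
        simp only [lp.coeFn_add, Pi.add_apply]
        show lapA G hG (((f : L2 V) + (g : L2 V) : L2 V)) x = _
        simp only [lapA, lp.coeFn_add, Pi.add_apply]
        rw [← Finset.sum_add_distrib]
        exact Finset.sum_congr rfl fun y _ => by ring
      map_smul' := by
        intro c f
        apply lp.ext
        funext x
        simp only [RingHom.id_apply, lp.coeFn_smul, Pi.smul_apply, smul_eq_mul]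
        show lapA G hG ((c • (f : L2 V) : L2 V)) x = _
        simp only [lapA, lp.coeFn_smul, Pi.smul_apply, smul_eq_mul]
        rw [Finset.mul_sum]
        exact Finset.sum_congr rfl fun y _ => by ring }

end Adjacency

section Jacobi

/-- The pointwise action of the Jacobi matrix with off-diagonal entries `a n` and
diagonal entries `b n` (with the convention `a (-1) = 0`). -/
def jacA (a b : ℕ → ℝ) (f : ℕ → ℂ) (n : ℕ) : ℂ :=
  (if n = 0 then 0 else (a (n - 1) : ℂ) * f (n - 1)) + (b n : ℂ) * f n + (a n : ℂ) * f (n + 1)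

lemma jacA_support (a b : ℕ → ℝ) {f : ℕ → ℂ} (hf : {n | f n ≠ 0}.Finite) :
    {n | jacA a b f n ≠ 0}.Finite := by
  have hsub : {n | jacA a b f n ≠ 0} ⊆
      (fun m => m + 1) '' {n | f n ≠ 0} ∪ {n | f n ≠ 0} ∪ (fun m => m - 1) '' {n | f n ≠ 0} := by
    intro n hn
    by_contra hc
    simp only [Set.mem_union, not_or] at hc
    apply hn
    show jacA a b f n = 0
    have h1 : f n = 0 := by
      by_contra h; exact hc.1.2 h
    have h3 : f (n + 1) = 0 := by
      by_contra h
      exact hc.2 ⟨n + 1, h, by show n + 1 - 1 = n; omega⟩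
    rcases Nat.eq_zero_or_pos n with h0 | h0
    · subst h0; simp [jacA, h1, h3]
    · have h2 : f (n - 1) = 0 := by
        by_contra h
        exact hc.1.1 ⟨n - 1, h, by show n - 1 + 1 = n; omega⟩
      simp [jacA, h1, h2, h3]
  refine Set.Finite.subset ?_ hsub
  exact ((hf.image _).union hf).union (hf.image _)

/-- The Jacobi matrix with off-diagonal entries `a n > 0` and diagonal entries `b n`,
as a densely defined operator on `ℓ²(ℕ)` with domain the finitely supported sequences. -/
def jacOp (a b : ℕ → ℝ) : L2 ℕ →ₗ.[ℂ] L2 ℕ where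
  domain := Cc ℕ
  toFun :=
    { toFun := fun f => ⟨jacA a b f, memℓp_of_finite (jacA_support a b f.2)⟩
      map_add' := by
        intro f g
        apply lp.ext
        funext n
        simp only [lp.coeFn_add, Pi.add_apply]
        show jacA a b (((f : L2 ℕ) + (g : L2 ℕ) : L2 ℕ)) n = _
        simp only [jacA, lp.coeFn_add, Pi.add_apply]
        split <;> ring
      map_smul' := by
        intro c f
        apply lp.ext
        funext n
        simp only [RingHom.id_apply, lp.coeFn_smul, Pi.smul_apply, smul_eq_mul]
        show jacA a b ((c • (f : L2 ℕ) : L2 ℕ)) n = _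
        simp only [jacA, lp.coeFn_smul, Pi.smul_apply, smul_eq_mul]
        split <;> ring }

end Jacobi

section Eta

variable {H : Type*} [NormedAddCommGroup H] [InnerProductSpace ℂ H] [CompleteSpace H]

/-- The deficiency subspace `ker (T* - z)` of a (partially defined) operator. -/
def defSubspace (T : H →ₗ.[ℂ] H) (z : ℂ) : Submodule ℂ T.adjoint.domain :=
  LinearMap.ker (T.adjoint.toFun - z • T.adjoint.domain.subtype)

/-- The deficiency index `η₊(T) = dim ker (T* - i)`. -/
def etaP (T : H →ₗ.[ℂ] H) : Cardinal := Module.rank ℂ (defSubspace T Complex.I)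

/-- The deficiency index `η₋(T) = dim ker (T* + i)`. -/
def etaM (T : H →ₗ.[ℂ] H) : Cardinal := Module.rank ℂ (defSubspace T (-Complex.I))

/-- A partially defined operator is symmetric if `⟪T f, g⟫ = ⟪f, T g⟫` on its domain. -/
def IsSymm (T : H →ₗ.[ℂ] H) : Prop :=
  ∀ f g : T.domain, (inner ℂ (T f) (g : H) : ℂ) = inner ℂ (f : H) (T g)

/-- A densely defined operator is essentially self-adjoint if its closure is self-adjoint. -/
def EssSelfAdj (T : H →ₗ.[ℂ] H) : Prop :=
  T.closure.adjoint = T.closure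

/-- The restriction of the sum of two partially defined operators to the domain
of the first one, assuming domain inclusion. -/
def sumRestrict (S T : H →ₗ.[ℂ] H) (h : S.domain ≤ T.domain) : H →ₗ.[ℂ] H :=
  ⟨S.domain, S.toFun + T.toFun.comp (Submodule.inclusion h)⟩

/-- The sum of a partially defined operator and a bounded operator, with the
domain of the former. -/
def addBdd (S : H →ₗ.[ℂ] H) (B : H →L[ℂ] H) : H →ₗ.[ℂ] H :=
  ⟨S.domain, S.toFun + (B : H →ₗ[ℂ] H).comp S.domain.subtype⟩

end Eta

section Graphs

variable {V : Type*}

/-- The sphere of radius `n` around the vertex `v` (w.r.t. the graph metric). -/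
def sphere (G : SimpleGraph V) (v : V) (n : ℕ) : Set V := {w | G.dist v w = n}

/-- A connected graph is an antitree with root `v` if every vertex `w ≠ v` at distance
`n ≥ 1` from `v` has exactly `S_{n-1}(v) ∪ S_{n+1}(v)` as its set of neighbours. -/
def IsAntitree (G : SimpleGraph V) (v : V) : Prop :=
  G.Connected ∧ ∀ w, w ≠ v →
    G.neighborSet w = sphere G v (G.dist v w - 1) ∪ sphere G v (G.dist v w + 1)

/-- A function is radially symmetric (w.r.t. the root `v`) if it is constant on
each sphere around `v`. -/
def RadSymm (G : SimpleGraph V) (v : V) (f : V → ℂ) : Prop :=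
  ∀ x y, G.dist v x = G.dist v y → f x = f y

/-- The average of `f` over the sphere of radius `n` around `v`. -/
def sphAvg (G : SimpleGraph V) (v : V) (hfin : ∀ n, (sphere G v n).Finite)
    (f : V → ℂ) (n : ℕ) : ℂ :=
  (1 / ((sphere G v n).ncard : ℂ)) * ∑ y ∈ (hfin n).toFinset, f y

/-- The sphere-averaging map `P`. -/
def sphP (G : SimpleGraph V) (v : V) (hfin : ∀ n, (sphere G v n).Finite)
    (f : V → ℂ) (x : V) : ℂ :=
  sphAvg G v hfin f (G.dist v x)

/-- The disjoint union of `n` copies of a graph. -/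
def copies (G : SimpleGraph V) (n : ℕ) : SimpleGraph (Fin n × V) where
  Adj p q := p.1 = q.1 ∧ G.Adj p.2 q.2
  symm := ⟨fun p q h => ⟨h.1.symm, h.2.symm⟩⟩
  loopless := ⟨fun q h => G.loopless.irrefl q.2 h.2⟩

/-- The disjoint union of copies of a locally finite graph is locally finite. -/
def copiesLF (G : SimpleGraph V) (hG : G.LocallyFinite) (n : ℕ) :
    (copies G n).LocallyFinite := fun p =>
  Set.Finite.fintype (by
    haveI := hG p.2
    have hsub : (copies G n).neighborSet p ⊆ (fun w => (p.1, w)) '' (G.neighborSet p.2) := by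
      rintro ⟨i, w⟩ ⟨h1, h2⟩
      exact ⟨w, h2, by simp [h1]⟩
    exact ((G.neighborSet p.2).toFinite.image _).subset hsub)

end Graphs

end DefIdx

namespace Submodule

variable {𝕜 E F : Type*} [RCLike 𝕜] [NormedAddCommGroup E] [InnerProductSpace 𝕜 E]
  [NormedAddCommGroup F] [InnerProductSpace 𝕜 F]

theorem adjoint_topologicalClosure (g : Submodule 𝕜 (E × F)) :
    g.topologicalClosure.adjoint = g.adjoint := by
  ext x
  simp only [mem_adjoint_iff]
  refine ⟨fun h a b hab => h a b (g.le_topologicalClosure hab), fun h a b hab => ?_⟩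
  have hclosed : IsClosed {p : E × F | inner 𝕜 p.2 x.1 - inner 𝕜 p.1 x.2 = 0} :=
    isClosed_eq (by fun_prop) continuous_const
  exact hclosed.closure_subset_iff.mpr (fun p hp => h p.1 p.2 hp) hab

end Submodule

namespace LinearPMap

section General

variable {𝕜 E F : Type*} [RCLike 𝕜] [NormedAddCommGroup E] [InnerProductSpace 𝕜 E]
  [NormedAddCommGroup F] [InnerProductSpace 𝕜 F] {T : E →ₗ.[𝕜] F}

theorem closure_le_of_le_of_isClosed {S : E →ₗ.[𝕜] F} (h : T ≤ S) (hS : S.IsClosed) :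
    T.closure ≤ S := by
  refine le_of_le_graph ?_
  rw [← (hS.isClosable.leIsClosable h).graph_closure_eq_closure_graph]
  exact Submodule.topologicalClosure_minimal _ (le_graph_of_le h) hS

variable [CompleteSpace E]

theorem IsClosable.adjoint_closure (hT : T.IsClosable) (hd : Dense (T.domain : Set E)) :
    T.closure† = T† := by
  apply eq_of_eq_graph
  rw [adjoint_graph_eq_graph_adjoint (hd.mono T.le_closure.1), adjoint_graph_eq_graph_adjoint hd,
    ← hT.graph_closure_eq_closure_graph, Submodule.adjoint_topologicalClosure]

end General

variable {𝕜 E : Type*} [RCLike 𝕜] [NormedAddCommGroup E] [InnerProductSpace 𝕜 E]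
  [CompleteSpace E] {T : E →ₗ.[𝕜] E}

theorem isFormalAdjoint_self_of_le_adjoint (hd : Dense (T.domain : Set E)) (h : T ≤ T†) :
    T.IsFormalAdjoint T := by
  intro x y
  obtain ⟨x', hx, hTx⟩ := exists_of_le h x
  rw [hTx, hx]
  exact adjoint_isFormalAdjoint hd x' y

theorem IsFormalAdjoint.isClosable (hd : Dense (T.domain : Set E)) (h : T.IsFormalAdjoint T) :
    T.IsClosable :=
  (adjoint_isClosed hd).isClosable.leIsClosable (h.le_adjoint hd)

theorem IsFormalAdjoint.closure_le_adjoint (hd : Dense (T.domain : Set E))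
    (h : T.IsFormalAdjoint T) : T.closure ≤ T.closure† := by
  rw [(h.isClosable hd).adjoint_closure hd]
  exact closure_le_of_le_of_isClosed (h.le_adjoint hd) (adjoint_isClosed hd)

section Complex

open Complex

variable {H : Type*} [NormedAddCommGroup H] [InnerProductSpace ℂ H] {S : H →ₗ.[ℂ] H}

theorem IsFormalAdjoint.norm_add_I_smul_sq (h : S.IsFormalAdjoint S) (x : S.domain) :
    ‖S x + I • (x : H)‖ ^ 2 = ‖S x‖ ^ 2 + ‖(x : H)‖ ^ 2 := by
  have hreal : conj (inner ℂ (S x) (x : H)) = inner ℂ (S x) (x : H) := by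
    rw [inner_conj_symm, h x x]
  have hcross : RCLike.re (inner ℂ (S x) (I • (x : H))) = 0 := by
    simp [conj_eq_iff_im.mp hreal]
  rw [@norm_add_sq ℂ, hcross, norm_smul, norm_I, one_mul]
  ring

variable [CompleteSpace H]

theorem isClosed_range_add_I_smul (hS : S.IsClosed) (h : S.IsFormalAdjoint S) :
    _root_.IsClosed (LinearMap.range (S.toFun + I • S.domain.subtype) : Set H) := by
  have : CompleteSpace S.graph := hS.completeSpace_coe
  let g : S.graph →L[ℂ] H :=
    (ContinuousLinearMap.snd ℂ H H + I • ContinuousLinearMap.fst ℂ H H).comp S.graph.subtypeL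
  have hrange : Set.range g = LinearMap.range (S.toFun + I • S.domain.subtype) := by
    ext w
    constructor
    · rintro ⟨⟨p, hp⟩, rfl⟩
      obtain ⟨x, hx1, hx2⟩ := (mem_graph_iff S).mp hp
      exact ⟨x, by simp [g, hx1, hx2]⟩
    · rintro ⟨x, rfl⟩
      exact ⟨⟨_, S.mem_graph x⟩, by simp [g]⟩
  have hg : AntilipschitzWith 1 g := g.antilipschitz_of_bound fun ⟨(x₁, x₂), hp⟩ => by
    obtain ⟨x, rfl, rfl⟩ := (mem_graph_iff S).mp hp
    have hsq := h.norm_add_I_smul_sq x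
    have hgx : g ⟨_, hp⟩ = S x + I • (x : H) := by simp [g]
    rw [hgx, NNReal.coe_one, one_mul, Submodule.coe_norm, norm_prod_le_iff]
    constructor <;>
      nlinarith [norm_nonneg (S x), norm_nonneg (x : H), norm_nonneg (S x + I • (x : H))]
  rw [← hrange]
  exact hg.isClosed_range g.uniformContinuous

theorem range_add_I_smul_eq_top (hd : Dense (S.domain : Set H)) (hS : S.IsClosed)
    (h : S.IsFormalAdjoint S) (hker : ∀ y : S†.domain, S† y = I • (y : H) → (y : H) = 0) :
    LinearMap.range (S.toFun + I • S.domain.subtype) = ⊤ := by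
  set R := LinearMap.range (S.toFun + I • S.domain.subtype)
  have : CompleteSpace R := (isClosed_range_add_I_smul hS h).completeSpace_coe
  refine Submodule.orthogonal_eq_bot_iff.mp ((Submodule.eq_bot_iff _).mpr fun y hy => ?_)
  have hperp : ∀ x : S.domain, inner ℂ (I • y) (x : H) = inner ℂ y (S x) := by
    intro x
    have hyx := (Submodule.mem_orthogonal' R y).mp hy _ (LinearMap.mem_range_self _ x)
    simp only [LinearMap.add_apply, LinearMap.smul_apply, Submodule.subtype_apply, toFun_eq_coe,
      inner_add_right, inner_smul_right] at hyx
    rw [inner_smul_left, conj_I]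
    linear_combination -hyx
  exact hker ⟨y, mem_adjoint_domain_of_exists y ⟨_, hperp⟩⟩ (adjoint_apply_eq hd _ hperp)

theorem adjoint_eq_self_of_isClosed (hd : Dense (S.domain : Set H)) (hS : S.IsClosed)
    (hle : S ≤ S†) (hplus : ∀ y : S†.domain, S† y = I • (y : H) → (y : H) = 0)
    (hminus : ∀ y : S†.domain, S† y = -I • (y : H) → (y : H) = 0) : S† = S := by
  refine le_antisymm (le_of_le_graph fun ⟨p₁, p₂⟩ hp => ?_) hle
  obtain ⟨y, rfl, rfl⟩ := (mem_graph_iff _).mp hp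
  have hrange := range_add_I_smul_eq_top hd hS (isFormalAdjoint_self_of_le_adjoint hd hle) hplus
  -- solve `(S + i) x = (S† + i) y`; then `y - x` lies in `ker (S† + i)`
  obtain ⟨x, hx⟩ : S† y + I • (y : H) ∈ LinearMap.range (S.toFun + I • S.domain.subtype) :=
    hrange ▸ Submodule.mem_top
  obtain ⟨x', hxx', hSx⟩ := exists_of_le hle x
  have hyx : (y : H) = x := by
    rw [hxx', ← sub_eq_zero, ← Submodule.coe_sub]
    refine hminus (y - x') ?_
    simp only [LinearMap.add_apply, LinearMap.smul_apply, Submodule.subtype_apply,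
      toFun_eq_coe] at hx
    rw [LinearPMap.map_sub, ← hSx, Submodule.coe_sub, ← hxx']
    linear_combination (norm := module) -hx
  refine (mem_graph_iff S).mpr ⟨x, hyx.symm, ?_⟩
  simp only [LinearMap.add_apply, LinearMap.smul_apply, Submodule.subtype_apply, toFun_eq_coe,
    hyx] at hx
  exact add_right_cancel hx

end Complex

end LinearPMap

namespace DefIdx

section Criterion

open LinearPMap Complex

variable {H : Type*} [NormedAddCommGroup H] [InnerProductSpace ℂ H] [CompleteSpace H]
  {T : H →ₗ.[ℂ] H}

theorem defSubspace_eq_bot_iff (z : ℂ) :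
    defSubspace T z = ⊥ ↔
      ∀ y : T.adjoint.domain, T.adjoint y = z • (y : H) → (y : H) = 0 := by
  simp only [defSubspace, LinearMap.ker_eq_bot', LinearMap.sub_apply, LinearMap.smul_apply,
    Submodule.subtype_apply, toFun_eq_coe, sub_eq_zero, ← Submodule.coe_eq_zero]

theorem essSelfAdj_of_defSubspace_eq_bot (hd : Dense (T.domain : Set H)) (hT : IsSymm T)
    (hplus : defSubspace T I = ⊥) (hminus : defSubspace T (-I) = ⊥) : EssSelfAdj T := by
  have hsymm : T.IsFormalAdjoint T := hT
  have hcl := hsymm.isClosable hd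
  rw [defSubspace_eq_bot_iff, ← hcl.adjoint_closure hd] at hplus hminus
  exact adjoint_eq_self_of_isClosed (hd.mono T.le_closure.1) hcl.closure_isClosed
    (hsymm.closure_le_adjoint hd) hplus hminus

end Criterion

section FinitelySupported

variable {V : Type*} [DecidableEq V]

theorem single_mem_Cc (i : V) (c : ℂ) : lp.single 2 i c ∈ Cc V :=
  (Set.finite_singleton i).subset fun j hj => by
    by_contra hji
    exact hj (by rw [lp.single_apply, Pi.single_eq_of_ne hji])

theorem sum_single_of_finite {f : L2 V} (hf : {i | f i ≠ 0}.Finite) :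
    ∑ i ∈ hf.toFinset, lp.single 2 i (f i) = f :=
  (hasSum_sum_of_ne_finset_zero fun i hi => by simp_all).unique
    (lp.hasSum_single (by norm_num) f)

theorem dense_Cc : Dense (Cc V : Set (L2 V)) := fun f =>
  mem_closure_of_tendsto (lp.hasSum_single (by norm_num) f)
    (Filter.Eventually.of_forall fun _ => Submodule.sum_mem _ fun i _ => single_mem_Cc i (f i))

end FinitelySupported

section JacobiMatrix

variable (a b : ℕ → ℝ)

theorem jacOp_single (n : ℕ) (c : ℂ) :
    jacOp a b ⟨lp.single 2 n c, single_mem_Cc n c⟩ =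
      lp.single 2 (n + 1) (a n * c) + lp.single 2 n (b n * c) +
        (if n = 0 then 0 else lp.single 2 (n - 1) (a (n - 1) * c)) := by
  ext k
  change jacA a b (Pi.single n c) k = _
  rcases n with _ | n <;>
  simp only [jacA, lp.coeFn_add, lp.coeFn_single, lp.coeFn_zero, Pi.add_apply, Pi.zero_apply,
    Pi.single_apply, if_true, Nat.succ_ne_zero, if_false, Nat.add_sub_cancel] <;>
  split_ifs <;> first | omega | (subst_vars; norm_num [mul_comm])

theorem inner_jacOp_single (y : L2 ℕ) (n : ℕ) (c : ℂ) :
    inner ℂ y (jacOp a b ⟨lp.single 2 n c, single_mem_Cc n c⟩) = conj (jacA a b y n) * c := by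
  rw [jacOp_single]
  split_ifs with hn <;> simp [lp.inner_single_right, jacA, hn] <;> ring

theorem jacOp_isSymm : IsSymm (jacOp a b) := by
  intro f g
  obtain ⟨s, c, rfl⟩ : ∃ (s : Finset ℕ) (c : ℕ → ℂ),
      g = ∑ i ∈ s, (⟨lp.single 2 i (c i), single_mem_Cc i _⟩ : (jacOp a b).domain) :=
    ⟨_, _, Subtype.ext (by rw [Submodule.coe_sum]; exact (sum_single_of_finite g.2).symm)⟩
  have hsum := map_sum (jacOp a b).toFun
    (fun i => (⟨lp.single 2 i (c i), single_mem_Cc i _⟩ : (jacOp a b).domain)) s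
  simp only [LinearPMap.toFun_eq_coe] at hsum
  rw [hsum, Submodule.coe_sum, inner_sum, inner_sum]
  refine Finset.sum_congr rfl fun i _ => ?_
  rw [inner_jacOp_single, lp.inner_single_right, RCLike.inner_apply, mul_comm]
  rfl

theorem jacOp_adjoint_apply (y : (jacOp a b).adjoint.domain) :
    ⇑((jacOp a b).adjoint y : L2 ℕ) = jacA a b (y : L2 ℕ) := by
  funext n
  have h := LinearPMap.adjoint_isFormalAdjoint (dense_Cc (V := ℕ)) y
    ⟨lp.single 2 n 1, single_mem_Cc n 1⟩
  rw [inner_jacOp_single, lp.inner_single_right] at h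
  simpa using congrArg conj h

end JacobiMatrix

section LimitPoint

variable {a : ℕ → ℝ} (b : ℕ → ℝ) {u : ℕ → ℂ} {z : ℂ}

theorem jacA_wronskian (hu : jacA a b u = z • u) (n : ℕ) :
    a n * (conj (u n) * u (n + 1) - u n * conj (u (n + 1))) =
      (z - conj z) * ((∑ k ∈ Finset.range (n + 1), ‖u k‖ ^ 2 : ℝ) : ℂ) := by
  have heq (k : ℕ) : jacA a b u k = z * u k := congrFun hu k
  have hconj (k : ℕ) : conj (jacA a b u k) = conj z * conj (u k) := by
    rw [heq, map_mul]
  induction n with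
  | zero =>
    have h := heq 0
    have h' := hconj 0
    simp only [jacA, if_true, map_add, map_mul, Complex.conj_ofReal, map_zero] at h h'
    simp only [zero_add, Finset.sum_range_one, Complex.ofReal_pow, ← Complex.conj_mul']
    linear_combination conj (u 0) * h - u 0 * h'
  | succ n ih =>
    have h := heq (n + 1)
    have h' := hconj (n + 1)
    simp only [jacA, if_neg (Nat.succ_ne_zero n), Nat.add_sub_cancel, map_add, map_mul,
      Complex.conj_ofReal] at h h'
    push_cast at ih ⊢
    rw [Finset.sum_range_succ, ← Complex.conj_mul']
    linear_combination ih + conj (u (n + 1)) * h - u (n + 1) * h'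

theorem norm_conj_mul_sub_mul_conj_le (x y : ℂ) :
    ‖conj x * y - x * conj y‖ ≤ ‖x‖ ^ 2 + ‖y‖ ^ 2 :=
  calc ‖conj x * y - x * conj y‖ ≤ ‖conj x * y‖ + ‖x * conj y‖ := norm_sub_le _ _
    _ = 2 * ‖x‖ * ‖y‖ := by simp only [norm_mul, RCLike.norm_conj]; ring
    _ ≤ ‖x‖ ^ 2 + ‖y‖ ^ 2 := by nlinarith [sq_nonneg (‖x‖ - ‖y‖)]

theorem eq_zero_of_jacA_eq_smul (ha : ∀ n, 0 < a n) (hdiv : ¬ Summable fun n => 1 / a n)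
    (hu2 : Summable fun n => ‖u n‖ ^ 2) (hz : z.im ≠ 0) (hu : jacA a b u = z • u) : u = 0 := by
  by_contra hne
  obtain ⟨m, hm⟩ := Function.ne_iff.mp hne
  have hc : 0 < 2 * |z.im| * ‖u m‖ ^ 2 := by
    have : u m ≠ 0 := hm
    positivity
  have hbound (n : ℕ) : 1 / a (n + m) ≤ (‖u (n + m)‖ ^ 2 + ‖u (n + m + 1)‖ ^ 2) /
      (2 * |z.im| * ‖u m‖ ^ 2) := by
    rw [div_le_div_iff₀ (ha _) hc, one_mul]
    calc 2 * |z.im| * ‖u m‖ ^ 2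
        ≤ 2 * |z.im| * ∑ k ∈ Finset.range (n + m + 1), ‖u k‖ ^ 2 := by
          gcongr
          exact Finset.single_le_sum (f := fun k => ‖u k‖ ^ 2) (fun k _ => by positivity)
            (Finset.mem_range.mpr (by omega))
      _ = ‖a (n + m) *
            (conj (u (n + m)) * u (n + m + 1) - u (n + m) * conj (u (n + m + 1)))‖ := by
          rw [jacA_wronskian b hu, norm_mul, Complex.sub_conj, Complex.norm_real, norm_mul,
            Complex.norm_real, Complex.norm_I, mul_one, Real.norm_eq_abs, abs_mul, abs_two,
            Real.norm_of_nonneg (Finset.sum_nonneg fun k _ => by positivity)]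
      _ ≤ a (n + m) * (‖u (n + m)‖ ^ 2 + ‖u (n + m + 1)‖ ^ 2) := by
          rw [norm_mul, Complex.norm_real, Real.norm_of_nonneg (ha _).le]
          exact mul_le_mul_of_nonneg_left (norm_conj_mul_sub_mul_conj_le _ _) (ha _).le
      _ = _ := mul_comm _ _
  have hdom : Summable fun n => (‖u (n + m)‖ ^ 2 + ‖u (n + m + 1)‖ ^ 2) /
      (2 * |z.im| * ‖u m‖ ^ 2) :=
    (((summable_nat_add_iff m).mpr hu2).add ((summable_nat_add_iff (m + 1)).mpr hu2)).div_const _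
  exact hdiv ((summable_nat_add_iff m).mp
    (.of_nonneg_of_le (fun n => (one_div_pos.mpr (ha _)).le) hbound hdom))

end LimitPoint

theorem jacOp_defSubspace_eq_bot (a b : ℕ → ℝ) (ha : ∀ n, 0 < a n)
    (hdiv : ¬ Summable fun n => 1 / a n) {z : ℂ} (hz : z.im ≠ 0) :
    defSubspace (jacOp a b) z = ⊥ := by
  rw [defSubspace_eq_bot_iff]
  intro y hy
  have hu : jacA a b (y : L2 ℕ) = z • ⇑(y : L2 ℕ) := by
    rw [← jacOp_adjoint_apply, hy, lp.coeFn_smul]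
  have hu2 : Summable fun n => ‖(y : L2 ℕ) n‖ ^ 2 := by
    simpa using (lp.memℓp (y : L2 ℕ)).summable (by norm_num)
  exact lp.ext (eq_zero_of_jacA_eq_smul b ha hdiv hu2 hz hu)

/-- A Jacobi matrix with positive off-diagonal entries `a_n` satisfying
`Σ 1/a_n = ∞` and real diagonal entries is essentially self-adjoint on the finitely
supported sequences. -/
theorem jacobi_essentially_selfadjoint (a b : ℕ → ℝ) (ha : ∀ n, 0 < a n)
    (hdiv : ¬ Summable (fun n => 1 / a n)) :
    EssSelfAdj (jacOp a b) :=
  essSelfAdj_of_defSubspace_eq_bot dense_Cc (jacOp_isSymm a b)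
    (jacOp_defSubspace_eq_bot a b ha hdiv (by simp))
    (jacOp_defSubspace_eq_bot a b ha hdiv (by simp))

end DefIdx
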